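/- Let u ∈ C⁴ in space on (a,b) with u_t sufficiently smooth, satisfying u_t + u_xxxxt = f(u)_x on each subinterval I_n of a partition of (a,b), and suppose additionally that for every test function v ∈ H²₀(I_{k-1} ∪ I_k) one has ∫ u_t v + ∫ u_xxt v_xx = ∫ f(u)_x v over I_{k-1} ∪ I_k. Then the jump of u_xxxt at the shared node x_k vanishes: [u_xxxt(x_k)] = 0. -/

import Mathlib

/-!
Integrating `g'' v''` by parts twice on each of the two subintervals and using the strong
equation there reduces the weak identity to the node terms
`[g'''](x_k) v(x_k) - [g''](x_k) v'(x_k) = 0`. A smooth bump supported in `(x_{k-1}, x_{k+1})`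
and equal to `1` near `x_k` isolates `[g''']`.
-/

open intervalIntegral Set Filter Topology Metric

theorem exists_contDiff_eventuallyEq_one_eventuallyEq_zero_of_notMem
    {E : Type*} [NormedAddCommGroup E] [NormedSpace ℝ E] [HasContDiffBump E]
    {U : Set E} {c : E} (hU : U ∈ 𝓝 c) (n : ℕ∞) :
    ∃ v : E → ℝ, ContDiff ℝ n v ∧ v =ᶠ[𝓝 c] 1 ∧ ∀ x ∉ U, v =ᶠ[𝓝 x] 0 := by
  obtain ⟨ε, hε, hball⟩ := Metric.mem_nhds_iff.mp hU
  let f : ContDiffBump c := ⟨ε / 4, ε / 2, by positivity, by linarith⟩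
  refine ⟨f, f.contDiff, f.eventuallyEq_one, fun x hx => ?_⟩
  have hfar : ε / 2 < dist x c := by
    have : ε ≤ dist x c := not_lt.mp fun h => hx (hball (mem_ball.mpr h))
    linarith
  filter_upwards [(isOpen_lt continuous_const (continuous_id.dist continuous_const)).mem_nhds
    hfar] with y hy using f.zero_of_le_dist hy.le

theorem ContDiff.hasDerivAt_iteratedDeriv {n : ℕ} {g : ℝ → ℝ} (hg : ContDiff ℝ n g) {k : ℕ}
    (hk : k < n) (x : ℝ) : HasDerivAt (iteratedDeriv k g) (iteratedDeriv (k + 1) g x) x := by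
  rw [iteratedDeriv_succ]
  exact (hg.differentiable_iteratedDeriv k (by exact_mod_cast hk) x).hasDerivAt

theorem integral_iteratedDeriv_two_mul_iteratedDeriv_two {g v : ℝ → ℝ} (hg : ContDiff ℝ 4 g)
    (hv : ContDiff ℝ 2 v) (a b : ℝ) :
    ∫ x in a..b, iteratedDeriv 2 g x * iteratedDeriv 2 v x =
      (iteratedDeriv 2 g b * deriv v b - iteratedDeriv 2 g a * deriv v a)
        - (iteratedDeriv 3 g b * v b - iteratedDeriv 3 g a * v a)
        + ∫ x in a..b, iteratedDeriv 4 g x * v x := by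
  have hv_deriv (x : ℝ) : HasDerivAt v (deriv v x) x :=
    (hv.differentiable two_ne_zero x).hasDerivAt
  have hv'_deriv := hv.hasDerivAt_iteratedDeriv (k := 1) one_lt_two
  rw [iteratedDeriv_one] at hv'_deriv
  rw [integral_mul_deriv_eq_deriv_mul (fun x _ => hg.hasDerivAt_iteratedDeriv
      (k := 2) (by norm_num) x) (fun x _ => hv'_deriv x)
      ((hg.continuous_iteratedDeriv 3 (by norm_num)).intervalIntegrable _ _)
      ((hv.continuous_iteratedDeriv 2 le_rfl).intervalIntegrable _ _),
    integral_mul_deriv_eq_deriv_mul (fun x _ => hg.hasDerivAt_iteratedDeriv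
      (k := 3) (by norm_num) x) (fun x _ => hv_deriv x)
      ((hg.continuous_iteratedDeriv 4 le_rfl).intervalIntegrable _ _)
      ((hv.continuous_deriv (by norm_num)).intervalIntegrable _ _)]
  ring

theorem integral_mul_add_integral_iteratedDeriv_two_mul_of_add_iteratedDeriv_four_eq
    {g v F : ℝ → ℝ} {a b : ℝ} (hab : a ≤ b) (hg : ContDiff ℝ 4 g) (hv : ContDiff ℝ 2 v)
    (heq : ∀ x ∈ Icc a b, g x + iteratedDeriv 4 g x = F x) :
    (∫ x in a..b, g x * v x) + ∫ x in a..b, iteratedDeriv 2 g x * iteratedDeriv 2 v x =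
      (∫ x in a..b, F x * v x)
        + (iteratedDeriv 2 g b * deriv v b - iteratedDeriv 2 g a * deriv v a)
        - (iteratedDeriv 3 g b * v b - iteratedDeriv 3 g a * v a) := by
  have hF : ∫ x in a..b, F x * v x =
      (∫ x in a..b, g x * v x) + ∫ x in a..b, iteratedDeriv 4 g x * v x := by
    rw [← integral_add ((hg.continuous.fun_mul hv.continuous).intervalIntegrable _ _)
      (((hg.continuous_iteratedDeriv 4 le_rfl).fun_mul hv.continuous).intervalIntegrable _ _)]
    refine integral_congr fun x hx => ?_
    rw [uIcc_of_le hab] at hx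
    simp only [← heq x hx, add_mul]
  rw [integral_iteratedDeriv_two_mul_iteratedDeriv_two hg hv, hF]
  ring

theorem jump_third_derivative_vanishes_general
    (xkm xk xkp : ℝ) (h1 : xkm < xk) (h2 : xk < xkp)
    (gL gR F : ℝ → ℝ)
    (hgL : ContDiff ℝ 4 gL) (hgR : ContDiff ℝ 4 gR)
    (hstrongL : ∀ x ∈ Icc xkm xk, gL x + iteratedDeriv 4 gL x = F x)
    (hstrongR : ∀ x ∈ Icc xk xkp, gR x + iteratedDeriv 4 gR x = F x)
    (hweak : ∀ v : ℝ → ℝ, ContDiff ℝ 2 v →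
      v xkm = 0 → v xkp = 0 → deriv v xkm = 0 → deriv v xkp = 0 →
      ((∫ x in xkm..xk, gL x * v x) + (∫ x in xk..xkp, gR x * v x)) +
        ((∫ x in xkm..xk, iteratedDeriv 2 gL x * iteratedDeriv 2 v x) +
          (∫ x in xk..xkp, iteratedDeriv 2 gR x * iteratedDeriv 2 v x)) =
        (∫ x in xkm..xk, F x * v x) + (∫ x in xk..xkp, F x * v x)) :
    iteratedDeriv 3 gL xk = iteratedDeriv 3 gR xk := by
  obtain ⟨v, hv, hv_one, hv_zero⟩ :=
    exists_contDiff_eventuallyEq_one_eventuallyEq_zero_of_notMem (Ioo_mem_nhds h1 h2) 2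
  have hval {x : ℝ} (hx : x ∉ Ioo xkm xkp) : v x = 0 ∧ deriv v x = 0 :=
    ⟨(hv_zero x hx).eq_of_nhds, by simp [(hv_zero x hx).deriv_eq]⟩
  obtain ⟨hv_left, hv'_left⟩ := hval left_notMem_Ioo
  obtain ⟨hv_right, hv'_right⟩ := hval right_notMem_Ioo
  have hv_mid : v xk = 1 := hv_one.eq_of_nhds
  have hv'_mid : deriv v xk = 0 := by simp [hv_one.deriv_eq]
  have hL := integral_mul_add_integral_iteratedDeriv_two_mul_of_add_iteratedDeriv_four_eq
    h1.le hgL hv hstrongL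
  have hR := integral_mul_add_integral_iteratedDeriv_two_mul_of_add_iteratedDeriv_four_eq
    h2.le hgR hv hstrongR
  rw [hv_left, hv'_left, hv_mid, hv'_mid] at hL
  rw [hv_right, hv'_right, hv_mid, hv'_mid] at hR
  linarith [hweak v hv hv_left hv_right hv'_left hv'_right]

/-- Vanishing of the jump `[u_xxxt(x_k)]`: model the (time-differentiated) solution
`g = u_t(·, t)` piecewise by `gL` on `I_{k-1} = (x_{k-1}, x_k)` and `gR` on
`I_k = (x_k, x_{k+1})`, each `C⁴`, matching in `C¹` at the node `x_k` and satisfying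
the strong equation `g + g_xxxx = F` (with `F = f(u)_x`) on the closed subintervals.
If moreover, for every `v ∈ H²₀(I_{k-1} ∪ I_k)` (i.e. `v` of class `C²` vanishing with
its first derivative at `x_{k-1}` and `x_{k+1}`), the weak identity
`∫ g v + ∫ g_xx v_xx = ∫ F v` holds over `I_{k-1} ∪ I_k`, then the jump of the third
derivative of `g` across `x_k` vanishes: `gL'''(x_k) = gR'''(x_k)`. -/
theorem jump_third_derivative_vanishes
    (xkm xk xkp : ℝ) (h1 : xkm < xk) (h2 : xk < xkp)
    (gL gR F : ℝ → ℝ)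
    (hgL : ContDiff ℝ 4 gL) (hgR : ContDiff ℝ 4 gR)
    (hC0 : gL xk = gR xk) (hC1 : deriv gL xk = deriv gR xk)
    (hstrongL : ∀ x ∈ Icc xkm xk, gL x + iteratedDeriv 4 gL x = F x)
    (hstrongR : ∀ x ∈ Icc xk xkp, gR x + iteratedDeriv 4 gR x = F x)
    (hweak : ∀ v : ℝ → ℝ, ContDiff ℝ 2 v →
      v xkm = 0 → v xkp = 0 → deriv v xkm = 0 → deriv v xkp = 0 →
      ((∫ x in xkm..xk, gL x * v x) + (∫ x in xk..xkp, gR x * v x)) +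
        ((∫ x in xkm..xk, iteratedDeriv 2 gL x * iteratedDeriv 2 v x) +
          (∫ x in xk..xkp, iteratedDeriv 2 gR x * iteratedDeriv 2 v x)) =
        (∫ x in xkm..xk, F x * v x) + (∫ x in xk..xkp, F x * v x)) :
    iteratedDeriv 3 gL xk = iteratedDeriv 3 gR xk :=
  jump_third_derivative_vanishes_general xkm xk xkp h1 h2 gL gR F hgL hgR hstrongL hstrongR hweak
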